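/- arXiv:2406.03889 — 4 statements merged into one kernel-verified Lean document; each statement's English description precedes it below -/
import Mathlib

section
/- Let q > 0 and define, for a, b ∈ ℝ, h(a,b) := q ∫_b^a |s|^{q−1}(s − b) ds. Then there exists a constant γ = γ(q) > 0 such that for all a, b ∈ ℝ one has (1/γ)·(|a| + |b|)^{q−1} |a − b|² ≤ h(a,b) ≤ γ·(|a| + |b|)^{q−1} |a − b|². -/
/-!
Put `M = |a| + |b|` and `d = |a - b| ≤ M`; the substitution `s ↦ -s` reduces to `b < a`.
If `2d ≤ M`, then `a` and `b` have the same sign and `M/4 ≤ |s| ≤ M` on all of `[b, a]`, so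
`|s|^(q-1)` is `M^(q-1)` up to a factor `4^|q-1|` and the integral is comparable to
`M^(q-1) d²/2`. If `M ≤ 2d`, the weight `s - b` is at most `d` and
`∫_{-M}^{M} |s|^(q-1) ds = 2 M^q / q` gives the upper bound `4 M^(q-1) d²`. The lower bound in
both regimes comes from the quarter of `[b, a]` next to the endpoint of larger modulus: that
endpoint has modulus at least `M/2`, so `|s| ≥ M/4` there.
-/

open intervalIntegral MeasureTheory Set

lemma Real.rpow_le_rpow_abs_mul_rpow {x y c : ℝ} (r : ℝ) (hx : 0 < x) (hy : 0 < y)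
    (hxy : x ≤ c * y) (hyx : y ≤ c * x) : x ^ r ≤ c ^ |r| * y ^ r := by
  have hc : 0 < c := pos_of_mul_pos_left (hx.trans_le hxy) hy.le
  rcases le_total 0 r with hr | hr
  · calc x ^ r ≤ (c * y) ^ r := Real.rpow_le_rpow hx.le hxy hr
      _ = c ^ |r| * y ^ r := by rw [abs_of_nonneg hr, Real.mul_rpow hc.le hy.le]
  · calc x ^ r ≤ (y / c) ^ r :=
          Real.rpow_le_rpow_of_nonpos (div_pos hy hc)
            (div_le_of_le_mul₀ hc.le hx.le (by linarith)) hr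
      _ = c ^ |r| * y ^ r := by
          rw [abs_of_nonpos hr, Real.div_rpow hy.le hc.le, Real.rpow_neg hc.le]; ring

lemma intervalIntegrable_abs_rpow {r : ℝ} (hr : -1 < r) (a b : ℝ) :
    IntervalIntegrable (fun s : ℝ => |s| ^ r) volume a b := by
  have from_zero : ∀ c, 0 ≤ c → IntervalIntegrable (fun s : ℝ => |s| ^ r) volume 0 c :=
    fun c hc => (intervalIntegrable_rpow' hr).congr fun s hs => by
      rw [uIoc_of_le hc] at hs
      simp only [abs_of_pos hs.1]
  have to_zero : ∀ c, c ≤ 0 → IntervalIntegrable (fun s : ℝ => |s| ^ r) volume c 0 := by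
    intro c hc
    simpa only [abs_neg, neg_neg, neg_zero] using
      ((IntervalIntegrable.iff_comp_neg).mp (from_zero (-c) (neg_nonneg.mpr hc))).symm
  have any : ∀ c, IntervalIntegrable (fun s : ℝ => |s| ^ r) volume 0 c := fun c =>
    (le_total 0 c).elim (from_zero c) fun hc => (to_zero c hc).symm
  exact (any a).symm.trans (any b)

lemma integral_abs_rpow_of_nonneg {r c : ℝ} (hr : -1 < r) (hc : 0 ≤ c) :
    ∫ s in (0 : ℝ)..c, |s| ^ r = c ^ (r + 1) / (r + 1) := by
  rw [integral_congr (g := fun s : ℝ => s ^ r) fun s hs => by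
      rw [uIcc_of_le hc] at hs
      simp only [abs_of_nonneg hs.1],
    integral_rpow (Or.inl hr), Real.zero_rpow (by linarith), sub_zero]

lemma integral_abs_rpow_neg_self {r c : ℝ} (hr : -1 < r) (hc : 0 ≤ c) :
    ∫ s in -c..c, |s| ^ r = 2 * (c ^ (r + 1) / (r + 1)) := by
  have left : ∫ s in -c..0, |s| ^ r = ∫ s in (0 : ℝ)..c, |s| ^ r := by
    simpa only [abs_neg, neg_zero] using (integral_comp_neg (a := 0) (b := c) fun s => |s| ^ r).symm
  rw [← integral_add_adjacent_intervals (b := 0) (intervalIntegrable_abs_rpow hr _ _)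
    (intervalIntegrable_abs_rpow hr _ _), left, integral_abs_rpow_of_nonneg hr hc, two_mul]

lemma integral_sub_const_eq {b u v : ℝ} :
    ∫ s in u..v, (s - b) = ((v - b) ^ 2 - (u - b) ^ 2) / 2 := by
  simp only [integral_comp_sub_right (fun s => s), integral_id]

lemma abs_le_abs_add_abs_of_mem_Icc {a b s : ℝ} (hs : s ∈ Icc b a) : |s| ≤ |a| + |b| :=
  calc |s| ≤ max |b| |a| := abs_le_max_abs_abs hs.1 hs.2
    _ ≤ |b| + |a| := max_le_add_of_nonneg (abs_nonneg b) (abs_nonneg a)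
    _ = |a| + |b| := add_comm _ _

lemma abs_add_abs_sub_sub_le_two_mul_abs {a b s : ℝ} (hs : s ∈ Icc b a) :
    |a| + |b| - (a - b) ≤ 2 * |s| := by
  rcases hs with ⟨hbs, hsa⟩
  rcases abs_cases a with ⟨ha, _⟩ | ⟨ha, _⟩ <;>
    rcases abs_cases b with ⟨hb, _⟩ | ⟨hb, _⟩ <;>
    rcases abs_cases s with ⟨hs, _⟩ | ⟨hs, _⟩ <;> linarith

lemma intervalIntegrable_abs_rpow_mul_sub {q : ℝ} (hq : 0 < q) (b u v : ℝ) :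
    IntervalIntegrable (fun s : ℝ => |s| ^ (q - 1) * (s - b)) volume u v :=
  (intervalIntegrable_abs_rpow (by linarith) u v).mul_continuousOn (by fun_prop)

lemma integral_abs_rpow_mul_sub_neg (q a b : ℝ) :
    ∫ s in -b..-a, |s| ^ (q - 1) * (s - -b) = ∫ s in b..a, |s| ^ (q - 1) * (s - b) := by
  rw [← integral_comp_neg, integral_symm b a, ← intervalIntegral.integral_neg]
  congr 1 with s
  rw [abs_neg]; ring

lemma rpow_mul_sq_le_integral_of_subinterval {q a b u v : ℝ} (hq : 0 < q) (hba : b < a)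
    (hbu : b ≤ u) (huv : u ≤ v) (hva : v ≤ a)
    (hfar : ∀ s ∈ Icc u v, |a| + |b| ≤ 4 * |s|) :
    (|a| + |b|) ^ (q - 1) * ((v - b) ^ 2 - (u - b) ^ 2) ≤
      2 * 4 ^ |q - 1| * ∫ s in b..a, |s| ^ (q - 1) * (s - b) := by
  have hM : 0 < |a| + |b| := by linarith [le_abs_self a, neg_abs_le b]
  have pointwise : ∀ s ∈ Icc u v,
      (|a| + |b|) ^ (q - 1) * (s - b) ≤ 4 ^ |q - 1| * (|s| ^ (q - 1) * (s - b)) := by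
    intro s hs
    have hsM := abs_le_abs_add_abs_of_mem_Icc ⟨hbu.trans hs.1, hs.2.trans hva⟩
    rw [← mul_assoc]
    exact mul_le_mul_of_nonneg_right (Real.rpow_le_rpow_abs_mul_rpow _ hM
      (by linarith [hfar s hs]) (hfar s hs) (by linarith)) (by linarith [hs.1])
  have on_sub : ∫ s in u..v, (|a| + |b|) ^ (q - 1) * (s - b) ≤
      4 ^ |q - 1| * ∫ s in u..v, |s| ^ (q - 1) * (s - b) := by
    rw [← intervalIntegral.integral_const_mul]
    exact integral_mono_on huv ((by fun_prop : Continuous _).intervalIntegrable _ _)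
      ((intervalIntegrable_abs_rpow_mul_sub hq b u v).const_mul _) pointwise
  have sub_le : ∫ s in u..v, |s| ^ (q - 1) * (s - b) ≤ ∫ s in b..a, |s| ^ (q - 1) * (s - b) :=
    integral_mono_interval hbu huv hva
      ((ae_restrict_mem measurableSet_Ioc).mono fun s hs =>
        mul_nonneg (Real.rpow_nonneg (abs_nonneg s) _) (by linarith [hs.1]))
      (intervalIntegrable_abs_rpow_mul_sub hq b b a)
  rw [intervalIntegral.integral_const_mul, integral_sub_const_eq] at on_sub
  have h4 : (0 : ℝ) ≤ 4 ^ |q - 1| := by positivity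
  nlinarith [mul_le_mul_of_nonneg_left sub_le h4]

lemma rpow_mul_sq_le_integral {q a b : ℝ} (hq : 0 < q) (hba : b < a) :
    (|a| + |b|) ^ (q - 1) * (a - b) ^ 2 ≤
      32 * 4 ^ |q - 1| * ∫ s in b..a, |s| ^ (q - 1) * (s - b) := by
  have quarter : ∃ u v, b ≤ u ∧ u ≤ v ∧ v ≤ a ∧
      (a - b) ^ 2 ≤ 16 * ((v - b) ^ 2 - (u - b) ^ 2) ∧
      ∀ s ∈ Icc u v, |a| + |b| ≤ 4 * |s| := by
    rcases le_total (-b) a with h | h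
    · refine ⟨a - (a - b) / 4, a, by linarith, by linarith, le_rfl, by nlinarith,
        fun s hs => ?_⟩
      have : |a| + |b| ≤ 2 * a := by
        rw [abs_of_nonneg (by linarith : 0 ≤ a)]; linarith [abs_le.mpr ⟨by linarith, hba.le⟩]
      linarith [hs.1, le_abs_self s]
    · refine ⟨b, b + (a - b) / 4, le_rfl, by linarith, by linarith, by nlinarith,
        fun s hs => ?_⟩
      have : |a| + |b| ≤ -(2 * b) := by
        rw [abs_of_nonpos (by linarith : b ≤ 0)]; linarith [abs_le.mpr ⟨by linarith, h⟩]
      linarith [hs.2, neg_le_abs s]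
  obtain ⟨u, v, hbu, huv, hva, hlen, hfar⟩ := quarter
  have := rpow_mul_sq_le_integral_of_subinterval hq hba hbu huv hva hfar
  have : 0 ≤ (|a| + |b|) ^ (q - 1) := by positivity
  nlinarith

lemma integral_le_of_two_mul_le {q a b : ℝ} (hq : 0 < q) (hba : b < a)
    (hnear : 2 * (a - b) ≤ |a| + |b|) :
    ∫ s in b..a, |s| ^ (q - 1) * (s - b) ≤
      4 ^ |q - 1| * (|a| + |b|) ^ (q - 1) * (a - b) ^ 2 / 2 := by
  have hM : 0 < |a| + |b| := by linarith
  have pointwise : ∀ s ∈ Icc b a,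
      |s| ^ (q - 1) * (s - b) ≤ 4 ^ |q - 1| * (|a| + |b|) ^ (q - 1) * (s - b) := by
    intro s hs
    have hsM := abs_le_abs_add_abs_of_mem_Icc hs
    have hMs := abs_add_abs_sub_sub_le_two_mul_abs hs
    exact mul_le_mul_of_nonneg_right (Real.rpow_le_rpow_abs_mul_rpow _ (by linarith) hM
      (by linarith) (by linarith)) (by linarith [hs.1])
  calc ∫ s in b..a, |s| ^ (q - 1) * (s - b)
      ≤ ∫ s in b..a, 4 ^ |q - 1| * (|a| + |b|) ^ (q - 1) * (s - b) :=
        integral_mono_on hba.le (intervalIntegrable_abs_rpow_mul_sub hq b b a)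
          ((by fun_prop : Continuous _).intervalIntegrable _ _) pointwise
    _ = 4 ^ |q - 1| * (|a| + |b|) ^ (q - 1) * (a - b) ^ 2 / 2 := by
        rw [intervalIntegral.integral_const_mul, integral_sub_const_eq]; ring

lemma mul_integral_le_of_le_two_mul {q a b : ℝ} (hq : 0 < q) (hba : b < a)
    (hfar : |a| + |b| ≤ 2 * (a - b)) :
    q * ∫ s in b..a, |s| ^ (q - 1) * (s - b) ≤ 4 * (|a| + |b|) ^ (q - 1) * (a - b) ^ 2 := by
  set M := |a| + |b|
  have hM : 0 < M := by linarith [le_abs_self a, neg_abs_le b]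
  have hr : -1 < q - 1 := by linarith
  have weight_le : ∫ s in b..a, |s| ^ (q - 1) * (s - b) ≤
      (∫ s in b..a, |s| ^ (q - 1)) * (a - b) := by
    rw [← intervalIntegral.integral_mul_const]
    exact integral_mono_on hba.le (intervalIntegrable_abs_rpow_mul_sub hq b b a)
      ((intervalIntegrable_abs_rpow hr b a).mul_const _) fun s hs =>
        mul_le_mul_of_nonneg_left (by linarith [hs.2]) (by positivity)
  have interval_le : ∫ s in b..a, |s| ^ (q - 1) ≤ ∫ s in -M..M, |s| ^ (q - 1) :=
    integral_mono_interval (by linarith [neg_abs_le b, le_abs_self a, abs_nonneg a]) hba.le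
      (by linarith [le_abs_self a, abs_nonneg b])
      (Filter.Eventually.of_forall fun s => by positivity) (intervalIntegrable_abs_rpow hr _ _)
  rw [integral_abs_rpow_neg_self hr hM.le, sub_add_cancel] at interval_le
  have hMq : M ^ q = M ^ (q - 1) * M := by rw [Real.rpow_sub_one hM.ne', div_mul_cancel₀ _ hM.ne']
  calc q * ∫ s in b..a, |s| ^ (q - 1) * (s - b)
      ≤ q * ((∫ s in b..a, |s| ^ (q - 1)) * (a - b)) :=
        mul_le_mul_of_nonneg_left weight_le hq.le
    _ ≤ q * (2 * (M ^ q / q) * (a - b)) := by gcongr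
    _ = 2 * (M ^ (q - 1) * M) * (a - b) := by rw [hMq]; field_simp
    _ ≤ 4 * M ^ (q - 1) * (a - b) ^ 2 := by
        have : 0 ≤ M ^ (q - 1) := by positivity
        nlinarith [mul_le_mul_of_nonneg_left hfar this]

noncomputable def twoSidedBoundConst (q : ℝ) : ℝ :=
  max (max (q * 4 ^ |q - 1| / 2) 4) (32 * 4 ^ |q - 1| / q)

lemma twoSidedBoundConst_pos (q : ℝ) : 0 < twoSidedBoundConst q :=
  (lt_max_of_lt_right four_pos).trans_le (le_max_left _ _)

lemma two_sided_bound_of_lt {q a b : ℝ} (hq : 0 < q) (hba : b < a) :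
    1 / twoSidedBoundConst q * ((|a| + |b|) ^ (q - 1) * |a - b| ^ 2)
        ≤ q * ∫ s in b..a, |s| ^ (q - 1) * (s - b) ∧
      q * (∫ s in b..a, |s| ^ (q - 1) * (s - b))
        ≤ twoSidedBoundConst q * ((|a| + |b|) ^ (q - 1) * |a - b| ^ 2) := by
  rw [abs_of_pos (sub_pos.2 hba)]
  set γ := twoSidedBoundConst q
  set I := ∫ s in b..a, |s| ^ (q - 1) * (s - b)
  have hI : 0 ≤ I :=
    integral_nonneg hba.le fun s hs => mul_nonneg (by positivity) (by linarith [hs.1])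
  constructor
  · rw [one_div_mul_eq_div]
    refine div_le_of_le_mul₀ (twoSidedBoundConst_pos q).le (by positivity) ?_
    have hγ : 32 * 4 ^ |q - 1| / q ≤ γ := le_max_right _ _
    calc (|a| + |b|) ^ (q - 1) * (a - b) ^ 2 ≤ 32 * 4 ^ |q - 1| * I :=
          rpow_mul_sq_le_integral hq hba
      _ = 32 * 4 ^ |q - 1| / q * (q * I) := by field_simp
      _ ≤ γ * (q * I) := by gcongr
      _ = q * I * γ := by ring
  · rcases le_total (2 * (a - b)) (|a| + |b|) with hnear | hfar
    · have hγ : q * 4 ^ |q - 1| / 2 ≤ γ := (le_max_left _ _).trans (le_max_left _ _)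
      calc q * I ≤ q * (4 ^ |q - 1| * (|a| + |b|) ^ (q - 1) * (a - b) ^ 2 / 2) := by
            gcongr; exact integral_le_of_two_mul_le hq hba hnear
        _ = q * 4 ^ |q - 1| / 2 * ((|a| + |b|) ^ (q - 1) * (a - b) ^ 2) := by ring
        _ ≤ γ * ((|a| + |b|) ^ (q - 1) * (a - b) ^ 2) := by gcongr
    · have hγ : 4 ≤ γ := (le_max_right _ _).trans (le_max_left _ _)
      calc q * I ≤ 4 * (|a| + |b|) ^ (q - 1) * (a - b) ^ 2 :=
            mul_integral_le_of_le_two_mul hq hba hfar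
        _ ≤ γ * ((|a| + |b|) ^ (q - 1) * (a - b) ^ 2) := by rw [mul_assoc]; gcongr

/-- For `q > 0`, with `h a b := q ∫_b^a |s|^(q-1) (s - b) ds`, there is `γ = γ(q) > 0`
such that `(1/γ) (|a|+|b|)^(q-1) |a-b|² ≤ h a b ≤ γ (|a|+|b|)^(q-1) |a-b|²` for all reals. -/
theorem h_two_sided_bound (q : ℝ) (hq : 0 < q) :
    ∃ γ : ℝ, 0 < γ ∧ ∀ a b : ℝ,
      (1 / γ) * ((|a| + |b|) ^ (q - 1) * |a - b| ^ 2)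
          ≤ q * ∫ s in b..a, |s| ^ (q - 1) * (s - b) ∧
      q * (∫ s in b..a, |s| ^ (q - 1) * (s - b))
          ≤ γ * ((|a| + |b|) ^ (q - 1) * |a - b| ^ 2) := by
  refine ⟨twoSidedBoundConst q, twoSidedBoundConst_pos q, fun a b => ?_⟩
  rcases lt_trichotomy b a with hba | rfl | hab
  · exact two_sided_bound_of_lt hq hba
  · simp
  · simpa only [integral_abs_rpow_mul_sub_neg, abs_neg, neg_sub_neg, abs_sub_comm b a] using
      two_sided_bound_of_lt hq (neg_lt_neg hab)
end

section
/- Let q > 0 and define, for w, k ∈ ℝ, h₊(w,k) := q ∫_k^w |s|^{q−1}(s − k)₊ ds and h₋(w,k) := −q ∫_k^w |s|^{q−1}(s − k)₋ ds, where (x)₊ = max{x,0} and (x)₋ = max{−x,0}. Then there exists a constant γ = γ(q) > 0 such that for all a, b ∈ ℝ: (1/γ)·(|a| + |b|)^{q−1} (a − b)₊² ≤ h₊(a,b) ≤ γ·(|a| + |b|)^{q−1} (a − b)₊², and (1/γ)·(|a| + |b|)^{q−1} (a − b)₋² ≤ h₋(a,b) ≤ γ·(|a| + |b|)^{q−1}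 (a − b)₋². -/
/-!
With `F t = sign t * |t| ^ q` one has `q ∫_x^y |s|^(q-1) ds = F y - F x`, and
`F y - F x ≍ (|x| + |y|)^(q-1) (y - x)`: for `x, y` of one sign this is Bernoulli's inequality,
for opposite signs it is `|x|^q + |y|^q ≍ (|x| + |y|)^q`. On `[b, a]` the weight `s - b` is at
most `a - b`, and at least `(a - b)/2` on the upper half `[(a + b)/2, a]`; so `h₊(a, b)` lies
between `(a - b)/2 * (F a - F ((a + b)/2))` and `(a - b) * (F a - F b)`, both of size
`(|a| + |b|)^(q-1) (a - b)^2`. The substitution `s ↦ -s` turns `h₋(a, b)` into `h₊(-a, -b)`.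
-/

open intervalIntegral MeasureTheory Set

def Comparable (K a b : ℝ) : Prop := a ≤ K * b ∧ b ≤ K * a

namespace Comparable

variable {K L a b c : ℝ}

lemma symm (h : Comparable K a b) : Comparable K b a := And.symm h

lemma trans (hK : 0 ≤ K) (hL : 0 ≤ L) (hab : Comparable K a b) (hbc : Comparable L b c) :
    Comparable (K * L) a c :=
  ⟨hab.1.trans (by rw [mul_assoc]; exact mul_le_mul_of_nonneg_left hbc.1 hK),
    hbc.2.trans (by rw [mul_comm K, mul_assoc]; exact mul_le_mul_of_nonneg_left hab.2 hL)⟩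

lemma mono (h : Comparable K a b) (hKL : K ≤ L) (ha : 0 ≤ a) (hb : 0 ≤ b) :
    Comparable L a b :=
  ⟨h.1.trans (mul_le_mul_of_nonneg_right hKL hb), h.2.trans (mul_le_mul_of_nonneg_right hKL ha)⟩

lemma mul_left (h : Comparable K a b) (hc : 0 ≤ c) : Comparable K (c * a) (c * b) :=
  ⟨by rw [mul_left_comm]; exact mul_le_mul_of_nonneg_left h.1 hc,
    by rw [mul_left_comm]; exact mul_le_mul_of_nonneg_left h.2 hc⟩

lemma mul_right (h : Comparable K a b) (hc : 0 ≤ c) : Comparable K (a * c) (b * c) := by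
  simpa only [mul_comm _ c] using h.mul_left hc

lemma rpow (h : Comparable K a b) (hb : 0 < b) (hK : 1 ≤ K) (p : ℝ) :
    Comparable (K ^ |p|) (a ^ p) (b ^ p) := by
  suffices key : ∀ {x y : ℝ}, 0 < y → Comparable K x y → x ^ p ≤ K ^ |p| * y ^ p from
    ⟨key hb h, key (pos_of_mul_pos_right (hb.trans_le h.2) (by linarith)) h.symm⟩
  intro x y hy hxy
  have hx : 0 < x := pos_of_mul_pos_right (hy.trans_le hxy.2) (by linarith)
  rcases le_total 0 p with hp | hp
  · rw [abs_of_nonneg hp, ← Real.mul_rpow (by linarith) hy.le]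
    exact Real.rpow_le_rpow hx.le hxy.1 hp
  · have hyx : y / K ≤ x := by rw [div_le_iff₀ (by linarith), mul_comm]; exact hxy.2
    calc x ^ p ≤ (y / K) ^ p := Real.rpow_le_rpow_of_nonpos (by positivity) hyx hp
      _ = K ^ |p| * y ^ p := by
        rw [abs_of_nonpos hp, Real.div_rpow hy.le (by linarith), Real.rpow_neg (by linarith),
          div_eq_mul_inv, mul_comm]

lemma one_div_mul_le_and_le_mul (h : Comparable K a b) (hK : 0 < K) :
    1 / K * b ≤ a ∧ a ≤ K * b :=
  ⟨by rw [one_div, inv_mul_le_iff₀ hK]; exact h.2, h.1⟩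

end Comparable

lemma comparable_abs_add_abs_midpoint (a b : ℝ) :
    Comparable 2 (|a| + |b|) (|(a + b) / 2| + |a|) := by
  have hm : |(a + b) / 2| ≤ (|a| + |b|) / 2 := by
    rw [abs_div, abs_two]; gcongr; exact abs_add_le a b
  have hb : |b| ≤ 2 * |(a + b) / 2| + |a| := by
    calc |b| = |2 * ((a + b) / 2) + -a| := by ring_nf
      _ ≤ 2 * |(a + b) / 2| + |a| := by
        simpa [abs_mul] using abs_add_le (2 * ((a + b) / 2)) (-a)
  constructor <;> linarith [abs_nonneg a, abs_nonneg b]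

lemma comparable_one_sub_rpow {q t : ℝ} (hq : 0 < q) (ht₀ : 0 ≤ t) (ht₁ : t ≤ 1) :
    Comparable (max q q⁻¹) (1 - t ^ q) (1 - t) := by
  have hs : -1 ≤ t - 1 := by linarith
  rcases le_total q 1 with hq1 | hq1
  · have hlow : t ^ q ≤ 1 + q * (t - 1) := by
      simpa using rpow_one_add_le_one_add_mul_self hs hq.le hq1
    have hup : t ≤ t ^ q := Real.self_le_rpow_of_le_one ht₀ ht₁ hq1
    have hinv : 1 ≤ q⁻¹ := one_le_inv_iff₀.2 ⟨hq, hq1⟩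
    have hle_one : t ^ q ≤ 1 := Real.rpow_le_one ht₀ ht₁ hq.le
    refine (?_ : Comparable q⁻¹ _ _).mono (le_max_right _ _) (by linarith) (by linarith)
    constructor
    · nlinarith
    · rw [inv_mul_eq_div, le_div_iff₀ hq]; linarith
  · have hlow : 1 + q * (t - 1) ≤ t ^ q := by
      simpa using one_add_mul_self_le_rpow_one_add hs hq1
    have hup : t ^ q ≤ t := Real.rpow_le_self_of_le_one ht₀ ht₁ hq1
    refine (?_ : Comparable q _ _).mono (le_max_left _ _) (by linarith) (by linarith)
    constructor <;> nlinarith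

lemma comparable_rpow_sub_rpow {q u v : ℝ} (hq : 0 < q) (hu : 0 ≤ u) (huv : u ≤ v) :
    Comparable (max q q⁻¹) (v ^ q - u ^ q) (v ^ (q - 1) * (v - u)) := by
  rcases (hu.trans huv).eq_or_lt with hv | hv
  · obtain rfl : u = 0 := le_antisymm (hv ▸ huv) hu
    subst hv
    simp [Comparable]
  have h := (comparable_one_sub_rpow hq (div_nonneg hu hv.le)
    (div_le_one_of_le₀ huv hv.le)).mul_left (Real.rpow_nonneg hv.le q)
  convert h using 1
  · rw [Real.div_rpow hu hv.le]; field_simp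
  · rw [Real.rpow_sub_one hv.ne']; field_simp

lemma comparable_rpow_add_rpow {q a b : ℝ} (hq : 0 < q) (ha : 0 ≤ a) (hb : 0 ≤ b) :
    Comparable (max 2 (2 ^ q)) (a ^ q + b ^ q) ((a + b) ^ q) := by
  have hle : ∀ {x y : ℝ}, 0 ≤ x → 0 ≤ y → x ^ q ≤ (x + y) ^ q := fun hx hy =>
    Real.rpow_le_rpow hx (by linarith) hq.le
  have hsum : ∀ {x y : ℝ}, 0 ≤ x → x ≤ y → (x + y) ^ q ≤ 2 ^ q * (x ^ q + y ^ q) := by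
    intro x y hx hxy
    calc (x + y) ^ q ≤ (2 * y) ^ q := Real.rpow_le_rpow (by linarith) (by linarith) hq.le
      _ = 2 ^ q * y ^ q := Real.mul_rpow zero_le_two (hx.trans hxy)
      _ ≤ 2 ^ q * (x ^ q + y ^ q) := by
        have := Real.rpow_nonneg hx q
        gcongr; linarith
  have hnonneg := add_nonneg (Real.rpow_nonneg ha q) (Real.rpow_nonneg hb q)
  constructor
  · calc a ^ q + b ^ q ≤ 2 * (a + b) ^ q := by linarith [hle ha hb, add_comm a b ▸ hle hb ha]
      _ ≤ _ := mul_le_mul_of_nonneg_right (le_max_left _ _) (Real.rpow_nonneg (by linarith) q)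
  · calc (a + b) ^ q ≤ 2 ^ q * (a ^ q + b ^ q) := by
          rcases le_total a b with hab | hab
          · exact hsum ha hab
          · rw [add_comm a, add_comm (a ^ q)]; exact hsum hb hab
      _ ≤ _ := mul_le_mul_of_nonneg_right (le_max_right _ _) hnonneg

noncomputable def signedRpow (q t : ℝ) : ℝ := Real.sign t * |t| ^ q

section

variable {q a b x y : ℝ}

lemma signedRpow_neg (q t : ℝ) : signedRpow q (-t) = -signedRpow q t := by
  simp [signedRpow, Real.sign_neg]

lemma signedRpow_of_nonneg {t : ℝ} (hq : 0 < q) (ht : 0 ≤ t) : signedRpow q t = t ^ q := by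
  rcases ht.eq_or_lt with rfl | ht
  · simp [signedRpow, Real.zero_rpow hq.ne']
  · simp [signedRpow, Real.sign_of_pos ht, abs_of_pos ht]

lemma mul_integral_zero_abs_rpow (hq : 0 < q) (y : ℝ) :
    q * ∫ s in 0..y, |s| ^ (q - 1) = signedRpow q y := by
  have h_nonneg : ∀ y, 0 ≤ y → q * ∫ s in 0..y, |s| ^ (q - 1) = signedRpow q y := by
    intro y hy
    rw [signedRpow_of_nonneg hq hy, integral_congr (g := fun s => s ^ (q - 1)) fun s hs => by
      rw [uIcc_of_le hy] at hs
      simp [abs_of_nonneg hs.1], integral_rpow (Or.inl (by linarith)),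
      sub_add_cancel, Real.zero_rpow hq.ne', sub_zero, mul_div_cancel₀ _ hq.ne']
  rcases le_total 0 y with hy | hy
  · exact h_nonneg y hy
  · have := integral_comp_neg (a := 0) (b := -y) (fun s : ℝ => |s| ^ (q - 1))
    simp only [abs_neg, neg_neg, neg_zero] at this
    rw [← neg_neg y, signedRpow_neg, ← h_nonneg (-y) (neg_nonneg.2 hy), neg_neg, this,
      integral_symm y 0, mul_neg]

theorem mul_integral_abs_rpow (hq : 0 < q) (x y : ℝ) :
    q * ∫ s in x..y, |s| ^ (q - 1) = signedRpow q y - signedRpow q x := by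
  have hI := intervalIntegrable_abs_rpow (show -1 < q - 1 by linarith)
  rw [← integral_interval_sub_left (hI 0 y) (hI 0 x), mul_sub,
    mul_integral_zero_abs_rpow hq, mul_integral_zero_abs_rpow hq]

lemma signedRpow_monotone (hq : 0 < q) : Monotone (signedRpow q) := fun x y hxy => by
  rw [← sub_nonneg, ← mul_integral_abs_rpow hq]
  exact mul_nonneg hq.le (integral_nonneg hxy fun s _ => Real.rpow_nonneg (abs_nonneg s) _)

lemma comparable_signedRpow_sub_of_nonneg (hq : 0 < q) (hx : 0 ≤ x) (hxy : x ≤ y) :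
    Comparable (max q q⁻¹ * 2 ^ |q - 1|) (signedRpow q y - signedRpow q x)
      ((|x| + |y|) ^ (q - 1) * (y - x)) := by
  rcases (hx.trans hxy).eq_or_lt with hy | hy
  · obtain rfl : x = 0 := le_antisymm (hy ▸ hxy) hx
    subst hy
    simp [Comparable]
  rw [signedRpow_of_nonneg hq hx, signedRpow_of_nonneg hq hy.le, abs_of_nonneg hx,
    abs_of_nonneg hy.le]
  have hbase : Comparable 2 y (x + y) := by constructor <;> linarith
  exact (comparable_rpow_sub_rpow hq hx hxy).trans (by positivity) (by positivity)
    ((hbase.rpow (by linarith) one_le_two (q - 1)).mul_right (by linarith))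

lemma comparable_signedRpow_sub_of_neg_of_pos (hq : 0 < q) (hx : x < 0) (hy : 0 < y) :
    Comparable (max 2 (2 ^ q)) (signedRpow q y - signedRpow q x)
      ((|x| + |y|) ^ (q - 1) * (y - x)) := by
  convert comparable_rpow_add_rpow hq (neg_nonneg.2 hx.le) hy.le using 1
  · rw [← neg_neg x, signedRpow_neg, signedRpow_of_nonneg hq hy.le,
      signedRpow_of_nonneg hq (by linarith), neg_neg]
    ring
  · have hpos : -x + y ≠ 0 := by linarith
    rw [abs_of_neg hx, abs_of_pos hy, show y - x = -x + y by ring, Real.rpow_sub_one hpos,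
      div_mul_cancel₀ _ hpos]

theorem exists_comparable_signedRpow_sub (hq : 0 < q) :
    ∃ K, 0 < K ∧ ∀ x y, x ≤ y →
      Comparable K (signedRpow q y - signedRpow q x) ((|x| + |y|) ^ (q - 1) * (y - x)) := by
  refine ⟨max (max q q⁻¹ * 2 ^ |q - 1|) (max 2 (2 ^ q)),
    lt_max_of_lt_right (lt_max_of_lt_left two_pos), fun x y hxy => ?_⟩
  have hf : 0 ≤ signedRpow q y - signedRpow q x := sub_nonneg.2 (signedRpow_monotone hq hxy)
  have hg : 0 ≤ (|x| + |y|) ^ (q - 1) * (y - x) :=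
    mul_nonneg (Real.rpow_nonneg (by positivity) _) (sub_nonneg.2 hxy)
  rcases le_or_gt 0 x with hx | hx
  · exact (comparable_signedRpow_sub_of_nonneg hq hx hxy).mono (le_max_left _ _) hf hg
  rcases le_or_gt y 0 with hy | hy
  · have h := comparable_signedRpow_sub_of_nonneg hq (neg_nonneg.2 hy) (neg_le_neg hxy)
    rw [signedRpow_neg, signedRpow_neg, abs_neg, abs_neg, add_comm |y|, neg_sub_neg,
      neg_sub_neg] at h
    exact h.mono (le_max_left _ _) hf hg
  · exact (comparable_signedRpow_sub_of_neg_of_pos hq hx hy).mono (le_max_right _ _) hf hg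

noncomputable def hPlus (q a b : ℝ) : ℝ := q * ∫ s in b..a, |s| ^ (q - 1) * max (s - b) 0

lemma hPlus_of_le (hab : a ≤ b) : hPlus q a b = 0 := by
  rw [hPlus, integral_congr (g := fun _ => 0) fun s hs => ?_, intervalIntegral.integral_zero,
    mul_zero]
  rw [uIcc_of_ge hab] at hs
  simp [max_eq_right (sub_nonpos.2 hs.2)]

lemma intervalIntegrable_abs_rpow_mul_max (hq : 0 < q) (b x y : ℝ) :
    IntervalIntegrable (fun s => |s| ^ (q - 1) * max (s - b) 0) volume x y :=
  (intervalIntegrable_abs_rpow (by linarith) x y).mul_continuousOn (by fun_prop)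

lemma hPlus_le (hq : 0 < q) (hba : b ≤ a) :
    hPlus q a b ≤ (a - b) * (signedRpow q a - signedRpow q b) := by
  have hint :
      ∫ s in b..a, |s| ^ (q - 1) * max (s - b) 0 ≤ ∫ s in b..a, |s| ^ (q - 1) * (a - b) :=
    integral_mono_on hba (intervalIntegrable_abs_rpow_mul_max hq b b a)
      ((intervalIntegrable_abs_rpow (by linarith) b a).mul_const _) fun s hs =>
        mul_le_mul_of_nonneg_left (max_le (by linarith [hs.2]) (by linarith))
          (Real.rpow_nonneg (abs_nonneg s) _)
  calc hPlus q a b ≤ q * ∫ s in b..a, |s| ^ (q - 1) * (a - b) :=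
        mul_le_mul_of_nonneg_left hint hq.le
    _ = (a - b) * (signedRpow q a - signedRpow q b) := by
        rw [intervalIntegral.integral_mul_const, ← mul_integral_abs_rpow hq]; ring

lemma half_sub_mul_signedRpow_sub_midpoint_le_hPlus (hq : 0 < q) (hba : b ≤ a) :
    (a - b) / 2 * (signedRpow q a - signedRpow q ((a + b) / 2)) ≤ hPlus q a b := by
  have hnonneg : ∀ s, 0 ≤ |s| ^ (q - 1) * max (s - b) 0 := fun s =>
    mul_nonneg (Real.rpow_nonneg (abs_nonneg s) _) (le_max_right _ _)
  have hint : ∫ s in (a + b) / 2..a, |s| ^ (q - 1) * ((a - b) / 2)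
      ≤ ∫ s in (a + b) / 2..a, |s| ^ (q - 1) * max (s - b) 0 :=
    integral_mono_on (by linarith) ((intervalIntegrable_abs_rpow (by linarith) _ _).mul_const _)
      (intervalIntegrable_abs_rpow_mul_max hq b _ _) fun s hs =>
        mul_le_mul_of_nonneg_left (le_max_of_le_left (by linarith [hs.1]))
          (Real.rpow_nonneg (abs_nonneg s) _)
  have hsub : ∫ s in (a + b) / 2..a, |s| ^ (q - 1) * max (s - b) 0
      ≤ ∫ s in b..a, |s| ^ (q - 1) * max (s - b) 0 :=
    integral_mono_interval (by linarith) (by linarith) le_rfl (ae_of_all _ hnonneg)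
      (intervalIntegrable_abs_rpow_mul_max hq b b a)
  calc (a - b) / 2 * (signedRpow q a - signedRpow q ((a + b) / 2))
      = q * ∫ s in (a + b) / 2..a, |s| ^ (q - 1) * ((a - b) / 2) := by
        rw [intervalIntegral.integral_mul_const, ← mul_assoc, mul_integral_abs_rpow hq]; ring
    _ ≤ hPlus q a b := mul_le_mul_of_nonneg_left (hint.trans hsub) hq.le

lemma neg_mul_integral_max_sub_eq_hPlus_neg :
    -(q * ∫ s in b..a, |s| ^ (q - 1) * max (b - s) 0) = hPlus q (-a) (-b) := by
  have h := integral_comp_neg (a := b) (b := a) (fun s => |s| ^ (q - 1) * max (s - -b) 0)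
  simp only [abs_neg, neg_sub_neg] at h
  rw [hPlus, h, integral_symm (-b), mul_neg, neg_neg]

theorem exists_comparable_hPlus (hq : 0 < q) :
    ∃ γ, 0 < γ ∧ ∀ a b,
      Comparable γ (hPlus q a b) ((|a| + |b|) ^ (q - 1) * max (a - b) 0 ^ 2) := by
  obtain ⟨K, hK, hcomp⟩ := exists_comparable_signedRpow_sub hq
  have hc : 1 ≤ 4 * (2 : ℝ) ^ |q - 1| := by
    nlinarith [Real.one_le_rpow one_le_two (abs_nonneg (q - 1))]
  refine ⟨4 * 2 ^ |q - 1| * K, by positivity, fun a b => ?_⟩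
  rcases le_or_gt a b with hab | hba
  · simp [Comparable, hPlus_of_le hab, max_eq_right (sub_nonpos.2 hab)]
  rw [max_eq_left (sub_nonneg.2 hba.le)]
  constructor
  · calc hPlus q a b ≤ (a - b) * (signedRpow q a - signedRpow q b) := hPlus_le hq hba.le
      _ ≤ (a - b) * (K * ((|b| + |a|) ^ (q - 1) * (a - b))) :=
        mul_le_mul_of_nonneg_left (hcomp b a hba.le).1 (by linarith)
      _ = K * ((|a| + |b|) ^ (q - 1) * (a - b) ^ 2) := by rw [add_comm |b|]; ring
      _ ≤ 4 * 2 ^ |q - 1| * K * ((|a| + |b|) ^ (q - 1) * (a - b) ^ 2) :=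
        mul_le_mul_of_nonneg_right (le_mul_of_one_le_left hK.le hc) (by positivity)
  · have hpos : 0 < |(a + b) / 2| + |a| := by
      have : 0 < |a - (a + b) / 2| := abs_pos.2 (by linarith)
      linarith [abs_sub a ((a + b) / 2)]
    have hbase := (comparable_abs_add_abs_midpoint a b).rpow hpos one_le_two (q - 1)
    have hmid := (hcomp ((a + b) / 2) a (by linarith)).2
    set m := (a + b) / 2 with hm
    calc (|a| + |b|) ^ (q - 1) * (a - b) ^ 2
        ≤ 2 ^ |q - 1| * (|m| + |a|) ^ (q - 1) * (a - b) ^ 2 :=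
          mul_le_mul_of_nonneg_right hbase.1 (sq_nonneg _)
      _ = 4 * 2 ^ |q - 1| * ((a - b) / 2 * ((|m| + |a|) ^ (q - 1) * (a - m))) := by
          rw [hm]; ring
      _ ≤ 4 * 2 ^ |q - 1| * ((a - b) / 2 * (K * (signedRpow q a - signedRpow q m))) :=
          mul_le_mul_of_nonneg_left (mul_le_mul_of_nonneg_left hmid (by linarith)) (by positivity)
      _ = 4 * 2 ^ |q - 1| * K * ((a - b) / 2 * (signedRpow q a - signedRpow q m)) := by ring
      _ ≤ 4 * 2 ^ |q - 1| * K * hPlus q a b :=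
          mul_le_mul_of_nonneg_left (half_sub_mul_signedRpow_sub_midpoint_le_hPlus hq hba.le)
            (by positivity)
end

/-- For `q > 0`, with `h₊ w k := q ∫_k^w |s|^(q-1) (s-k)₊ ds` and
`h₋ w k := -q ∫_k^w |s|^(q-1) (s-k)₋ ds`, there is `γ = γ(q) > 0` such that for all `a b`:
`(1/γ)(|a|+|b|)^(q-1)(a-b)₊² ≤ h₊ a b ≤ γ (|a|+|b|)^(q-1)(a-b)₊²` and similarly for `h₋`. -/
theorem h_plus_minus_two_sided_bound (q : ℝ) (hq : 0 < q) :
    ∃ γ : ℝ, 0 < γ ∧ ∀ a b : ℝ,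
      ((1 / γ) * ((|a| + |b|) ^ (q - 1) * (max (a - b) 0) ^ 2)
          ≤ q * ∫ s in b..a, |s| ^ (q - 1) * max (s - b) 0 ∧
        q * (∫ s in b..a, |s| ^ (q - 1) * max (s - b) 0)
          ≤ γ * ((|a| + |b|) ^ (q - 1) * (max (a - b) 0) ^ 2)) ∧
      ((1 / γ) * ((|a| + |b|) ^ (q - 1) * (max (b - a) 0) ^ 2)
          ≤ -(q * ∫ s in b..a, |s| ^ (q - 1) * max (b - s) 0) ∧
        -(q * ∫ s in b..a, |s| ^ (q - 1) * max (b - s) 0)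
          ≤ γ * ((|a| + |b|) ^ (q - 1) * (max (b - a) 0) ^ 2)) := by
  obtain ⟨γ, hγ, hcomp⟩ := exists_comparable_hPlus hq
  refine ⟨γ, hγ, fun a b => ⟨(hcomp a b).one_div_mul_le_and_le_mul hγ, ?_⟩⟩
  rw [neg_mul_integral_max_sub_eq_hPlus_neg]
  simpa only [abs_neg, neg_sub_neg] using (hcomp (-a) (-b)).one_div_mul_le_and_le_mul hγ
end

section
/- Let {Y_j}_{j=0}^∞ be a sequence of positive real numbers, and let K > 1, b > 1 and δ > 0 be constants such that Y_{j+1} ≤ K b^j Y_j^{1+δ} for every j = 0, 1, 2, …. If Y_0 ≤ K^{−1/δ} b^{−1/δ²}, then Y_j → 0 as j → ∞. -/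
/-!
By induction, `Y j ≤ C * r ^ j` with `r = b ^ (-1/δ) < 1` and `C = K ^ (-1/δ) * b ^ (-1/δ²)`:
these constants are chosen so that `K * C ^ δ = r` and `b * r ^ δ = 1`, which is exactly what makes
`K * b ^ j * (C * r ^ j) ^ (1 + δ) = C * r ^ (j + 1)`.
-/

theorem le_mul_pow_of_le_mul_pow_mul_rpow {Y : ℕ → ℝ} {K b δ C r : ℝ}
    (hK : 0 ≤ K) (hb : 0 ≤ b) (hδ : 0 ≤ δ) (hC : 0 ≤ C) (hr : 0 ≤ r) (hY : ∀ j, 0 ≤ Y j)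
    (hrec : ∀ j : ℕ, Y (j + 1) ≤ K * b ^ j * Y j ^ (1 + δ))
    (hKC : K * C ^ δ = r) (hbr : b * r ^ δ = 1) (h0 : Y 0 ≤ C) :
    ∀ j, Y j ≤ C * r ^ j := by
  intro j
  induction j with
  | zero => simpa using h0
  | succ j ih =>
    have hpow : (C * r ^ j) ^ (1 + δ) = C * r ^ j * (C ^ δ * (r ^ δ) ^ j) := by
      rw [Real.rpow_one_add' (by positivity) (by positivity), Real.mul_rpow hC (by positivity),
        Real.rpow_pow_comm hr]
    calc Y (j + 1) ≤ K * b ^ j * Y j ^ (1 + δ) := hrec j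
      _ ≤ K * b ^ j * (C * r ^ j) ^ (1 + δ) := by gcongr; exact hY j
      _ = C * r ^ j * (K * C ^ δ) * (b * r ^ δ) ^ j := by rw [hpow, mul_pow]; ring
      _ = C * r ^ (j + 1) := by rw [hKC, hbr, one_pow]; ring

/-- Fast geometric convergence lemma: if `Y_{j+1} ≤ K b^j Y_j^(1+δ)` with `K, b > 1`, `δ > 0`,
and `Y_0 ≤ K^(-1/δ) b^(-1/δ²)`, then `Y_j → 0`. -/
theorem fast_geometric_convergence (Y : ℕ → ℝ) (K b δ : ℝ)
    (hK : 1 < K) (hb : 1 < b) (hδ : 0 < δ)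
    (hpos : ∀ j, 0 < Y j)
    (hrec : ∀ j : ℕ, Y (j + 1) ≤ K * b ^ j * Y j ^ (1 + δ))
    (h0 : Y 0 ≤ K ^ (-1 / δ) * b ^ (-1 / δ ^ 2)) :
    Filter.Tendsto Y Filter.atTop (nhds 0) := by
  have hK0 : 0 < K := one_pos.trans hK
  have hb0 : 0 < b := one_pos.trans hb
  set C := K ^ (-1 / δ) * b ^ (-1 / δ ^ 2)
  set r := b ^ (-1 / δ)
  have hKC : K * C ^ δ = r := by
    rw [Real.mul_rpow (by positivity) (by positivity), ← Real.rpow_mul hK0.le,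
      ← Real.rpow_mul hb0.le, div_mul_cancel₀ _ hδ.ne', Real.rpow_neg_one, ← mul_assoc,
      mul_inv_cancel₀ hK0.ne', one_mul]
    congr 1
    field_simp
  have hbr : b * r ^ δ = 1 := by
    rw [← Real.rpow_mul hb0.le, div_mul_cancel₀ _ hδ.ne', Real.rpow_neg_one,
      mul_inv_cancel₀ hb0.ne']
  have hr1 : r < 1 := Real.rpow_lt_one_of_one_lt_of_neg hb (div_neg_of_neg_of_pos (by norm_num) hδ)
  have hbound := le_mul_pow_of_le_mul_pow_mul_rpow hK0.le hb0.le hδ.le (by positivity)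
    (by positivity) (fun j => (hpos j).le) hrec hKC hbr h0
  refine squeeze_zero (fun j => (hpos j).le) hbound ?_
  simpa using (tendsto_pow_atTop_nhds_zero_of_lt_one (by positivity) hr1).const_mul C
end

section
/- Let p > 1 and q ≥ p − 1 with q > 0. There exists a constant γ > 0 depending only on p and q such that for every c ∈ (0,1), every k > 0 and every u ≥ 0, ∫_0^{(k−u)₊} q (k − s)^{q−1} (k − s + ck)^{−(p−1)} ds ≤ γ k^{q+1−p} ln( (1+c)/c ). -/
/-!
After the substitution `t = k - s` the integral runs over a subinterval of `[0, k]`, with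
integrand `q t^(q-1) (t + b)^(1-p)`, `b = c k`. This is the derivative of `t^q (t + b)^(1-p)`
plus `(p - 1) t^q (t + b)^(-p)`, and since `q ≥ p - 1` the latter is at most
`(p - 1) (k + b)^(q+1-p) / (t + b)`, whose integral is logarithmic: this produces
`log ((1 + c) / c)`. The boundary term `k^(q+1-p)` is absorbed using `log ((1 + c) / c) ≥ log 2`.
-/

open intervalIntegral

open MeasureTheory Real Set

section
variable {p q a b k t : ℝ}

lemma rpow_mul_rpow_neg_le_div (hpq : p - 1 ≤ q) (hq : 0 ≤ q) (ht : 0 ≤ t) (htk : t ≤ k)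
    (hb : 0 < b) : t ^ q * (t + b) ^ (-p) ≤ (k + b) ^ (q + 1 - p) / (t + b) := by
  have htb : 0 < t + b := by linarith
  calc t ^ q * (t + b) ^ (-p) ≤ (t + b) ^ q * (t + b) ^ (-p) := by gcongr; linarith
    _ = (t + b) ^ (q + 1 - p) / (t + b) := by
      rw [← rpow_add htb, ← rpow_sub_one htb.ne']; ring_nf
    _ ≤ (k + b) ^ (q + 1 - p) / (t + b) := by gcongr; linarith

lemma intervalIntegrable_mul_rpow_mul_rpow_add (r : ℝ) (hq : 0 < q) (ha : 0 ≤ a) (hak : a ≤ k)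
    (hb : 0 < b) :
    IntervalIntegrable (fun t => q * t ^ (q - 1) * (t + b) ^ r) volume a k := by
  refine ((intervalIntegrable_rpow' (by linarith)).const_mul q).mul_continuousOn ?_
  refine ((continuous_add_const b).continuousOn).rpow_const fun t ht => Or.inl ?_
  rw [uIcc_of_le hak] at ht
  exact (by linarith [ht.1] : 0 < t + b).ne'

lemma hasDerivAt_rpow_mul_rpow_add_add_log (C : ℝ) (ht : 0 < t) (htb : 0 < t + b) :
    HasDerivAt (fun t => t ^ q * (t + b) ^ (-(p - 1)) + C * log (t + b))
      (q * t ^ (q - 1) * (t + b) ^ (-(p - 1)) - (p - 1) * (t ^ q * (t + b) ^ (-p))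
        + C / (t + b)) t := by
  have hshift : HasDerivAt (fun t => t + b) 1 t := (hasDerivAt_id t).add_const b
  refine (((hasDerivAt_rpow_const (p := q) (Or.inl ht.ne')).mul
    (hshift.rpow_const (p := -(p - 1)) (Or.inl htb.ne'))).add
    ((hshift.log htb.ne').const_mul C)).congr_deriv ?_
  rw [show -(p - 1) - 1 = -p by ring]
  ring

lemma integral_mul_rpow_mul_rpow_add_le (hp : 1 ≤ p) (hpq : p - 1 ≤ q) (hq : 0 < q) (ha : 0 ≤ a)
    (hak : a ≤ k) (hb : 0 < b) :
    ∫ t in a..k, q * t ^ (q - 1) * (t + b) ^ (-(p - 1)) ≤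
      k ^ q * (k + b) ^ (-(p - 1)) + (p - 1) * (k + b) ^ (q + 1 - p) * log ((k + b) / (a + b)) := by
  set C := (p - 1) * (k + b) ^ (q + 1 - p)
  set F := fun t => t ^ q * (t + b) ^ (-(p - 1)) + C * log (t + b)
  have hshift_pos : ∀ t ∈ Icc a k, 0 < t + b := fun t ht => by linarith [ht.1]
  have hF_cont : ContinuousOn F (Icc a k) := by
    have hshift := (continuous_add_const b).continuousOn (s := Icc a k)
    exact ((continuous_rpow_const hq.le).continuousOn.mul
      (hshift.rpow_const fun t ht => Or.inl (hshift_pos t ht).ne')).add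
      ((hshift.log fun t ht => (hshift_pos t ht).ne').const_smul C)
  have hF_deriv : ∀ t ∈ Ioo a k, HasDerivWithinAt F
      (q * t ^ (q - 1) * (t + b) ^ (-(p - 1)) - (p - 1) * (t ^ q * (t + b) ^ (-p)) + C / (t + b))
      (Ioi t) t := fun t ht =>
    (hasDerivAt_rpow_mul_rpow_add_add_log C (by linarith [ht.1])
      (hshift_pos t (Ioo_subset_Icc_self ht))).hasDerivWithinAt
  have hF_deriv_ge : ∀ t ∈ Ioo a k, q * t ^ (q - 1) * (t + b) ^ (-(p - 1)) ≤
      q * t ^ (q - 1) * (t + b) ^ (-(p - 1)) - (p - 1) * (t ^ q * (t + b) ^ (-p)) + C / (t + b) := by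
    intro t ht
    have := mul_le_mul_of_nonneg_left
      (rpow_mul_rpow_neg_le_div hpq hq.le (by linarith [ht.1]) ht.2.le hb) (sub_nonneg.2 hp)
    rw [← mul_div_assoc] at this
    linarith
  have hint := (intervalIntegrable_iff_integrableOn_Icc_of_le hak).1
    (intervalIntegrable_mul_rpow_mul_rpow_add (-(p - 1)) hq ha hak hb)
  calc ∫ t in a..k, q * t ^ (q - 1) * (t + b) ^ (-(p - 1)) ≤ F k - F a :=
        integral_le_sub_of_hasDeriv_right_of_le hak hF_cont hF_deriv hint hF_deriv_ge
    _ = k ^ q * (k + b) ^ (-(p - 1)) + C * log ((k + b) / (a + b))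
          - a ^ q * (a + b) ^ (-(p - 1)) := by
      rw [log_div (hshift_pos k ⟨hak, le_rfl⟩).ne' (hshift_pos a ⟨le_rfl, hak⟩).ne']
      ring
    _ ≤ _ := by
      have : 0 ≤ a ^ q * (a + b) ^ (-(p - 1)) := by positivity
      linarith

lemma integral_mul_rpow_mul_rpow_add_mul_le {c : ℝ} (hp : 1 ≤ p) (hpq : p - 1 ≤ q) (hq : 0 < q)
    (hc : c ∈ Ioc 0 1) (hk : 0 < k) (ha : 0 ≤ a) (hak : a ≤ k) :
    ∫ t in a..k, q * t ^ (q - 1) * (t + c * k) ^ (-(p - 1)) ≤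
      k ^ (q + 1 - p) + (p - 1) * (2 ^ (q + 1 - p) * k ^ (q + 1 - p)) * log ((1 + c) / c) := by
  have hck : 0 < c * k := mul_pos hc.1 hk
  refine (integral_mul_rpow_mul_rpow_add_le hp hpq hq ha hak hck).trans ?_
  have hfirst : k ^ q * (k + c * k) ^ (-(p - 1)) ≤ k ^ (q + 1 - p) := by
    calc k ^ q * (k + c * k) ^ (-(p - 1)) ≤ k ^ q * k ^ (-(p - 1)) := by
          gcongr ?_ * ?_
          exact rpow_le_rpow_of_nonpos hk (by linarith) (by linarith)
      _ = k ^ (q + 1 - p) := by rw [← rpow_add hk]; ring_nf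
  have hbase : (k + c * k) ^ (q + 1 - p) ≤ 2 ^ (q + 1 - p) * k ^ (q + 1 - p) := by
    rw [← mul_rpow zero_le_two hk.le]
    exact rpow_le_rpow (by positivity) (by linarith [mul_le_mul_of_nonneg_right hc.2 hk.le])
      (by linarith)
  have hlog : log ((k + c * k) / (a + c * k)) ≤ log ((1 + c) / c) := by
    apply log_le_log (by positivity)
    calc (k + c * k) / (a + c * k) ≤ (k + c * k) / (c * k) := by gcongr; linarith
      _ = (1 + c) / c := by field_simp
  have hlog_nonneg : 0 ≤ log ((k + c * k) / (a + c * k)) :=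
    log_nonneg ((one_le_div (by linarith)).2 (by linarith))
  gcongr

/-- For `1 < p`, `p - 1 ≤ q`, `q > 0`: there is `γ = γ(p,q) > 0` such that for every
`c ∈ (0,1)`, `k > 0` and `u ≥ 0`,
`∫_0^{(k-u)₊} q (k-s)^(q-1) (k-s+ck)^(-(p-1)) ds ≤ γ k^(q+1-p) ln((1+c)/c)`. -/
theorem Phi_k_bound (p q : ℝ) (hp : 1 < p) (hpq : p - 1 ≤ q) (hq : 0 < q) :
    ∃ γ : ℝ, 0 < γ ∧ ∀ c k u : ℝ, c ∈ Set.Ioo (0 : ℝ) 1 → 0 < k → 0 ≤ u →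
      (∫ s in (0 : ℝ)..(max (k - u) 0),
          q * (k - s) ^ (q - 1) * (k - s + c * k) ^ (-(p - 1)))
        ≤ γ * k ^ (q + 1 - p) * Real.log ((1 + c) / c) := by
  have hlog2 : 0 < log 2 := log_pos one_lt_two
  refine ⟨1 / log 2 + (p - 1) * 2 ^ (q + 1 - p), by positivity, ?_⟩
  rintro c k u ⟨hc0, hc1⟩ hk hu
  set L := log ((1 + c) / c)
  have hL : log 2 ≤ L := log_le_log two_pos ((le_div_iff₀ hc0).2 (by linarith))
  have hkX : 0 ≤ k ^ (q + 1 - p) := by positivity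
  have hsubst := integral_comp_sub_left
    (fun t => q * t ^ (q - 1) * (t + c * k) ^ (-(p - 1))) k (a := 0) (b := max (k - u) 0)
  rw [sub_zero] at hsubst
  rw [hsubst]
  refine (integral_mul_rpow_mul_rpow_add_mul_le hp.le hpq hq ⟨hc0, hc1.le⟩ hk
    (sub_nonneg.2 (max_le (by linarith) hk.le)) (sub_le_self _ (le_max_right _ _))).trans ?_
  have habsorb : k ^ (q + 1 - p) ≤ 1 / log 2 * k ^ (q + 1 - p) * L := by
    rw [one_div, inv_mul_eq_div, div_mul_eq_mul_div, le_div_iff₀ hlog2]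
    exact mul_le_mul_of_nonneg_left hL hkX
  linarith
end
end
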